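/- arXiv:1911.11533 — 7 statements merged into one kernel-verified Lean document; each statement's English description precedes it below -/
import Mathlib

section
/- Let p : E ⥤ B be a Grothendieck (cartesian) fibration of categories. Define L to be the class of morphisms in E sent to isomorphisms by p, and R the class of p-cartesian morphisms. Then every morphism in L is left orthogonal to every morphism in R: for every commutative square with left edge in L and right edge in R there exists a unique diagonal lift. -/
open CategoryTheory CategoryTheory.Limits

def StronglyCartesian {E B : Type*} [Category E] [Category B] (p : E ⥤ B)
    {x' x : E} (f : x' ⟶ x) : Prop :=
  ∀ {z : E} (g : z ⟶ x) (h : p.obj z ⟶ p.obj x'),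
    p.map g = h ≫ p.map f → ∃! k : z ⟶ x', p.map k = h ∧ k ≫ f = g

/-- `p` is a Grothendieck fibration: every `h : b ⟶ p x` admits a strongly cartesian
lift with codomain `x`. -/
def GrothFibration {E B : Type*} [Category E] [Category B] (p : E ⥤ B) : Prop :=
  ∀ (x : E) {b : B} (h : b ⟶ p.obj x), ∃ (x' : E) (f : x' ⟶ x) (e : p.obj x' = b),
    StronglyCartesian p f ∧ p.map f = eqToHom e ≫ h

/-! The diagonal is the factorization of `v` through the cartesian `r` over `p(l)⁻¹ ≫ p(u)`;
it satisfies `l ≫ w = u` because both sides lie over `p(u)` and agree after `r`, and a map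
into the domain of a cartesian morphism is determined by these two data. -/

theorem StronglyCartesian.hom_ext {E B : Type*} [Category E] [Category B] {p : E ⥤ B}
    {c d : E} {r : c ⟶ d} (hr : StronglyCartesian p r) {z : E} {k k' : z ⟶ c}
    (hmap : p.map k = p.map k') (hcomp : k ≫ r = k' ≫ r) : k = k' :=
  (hr (k' ≫ r) (p.map k') (p.map_comp k' r)).unique ⟨hmap, hcomp⟩ ⟨rfl, rfl⟩

theorem inverted_left_orthogonal_cartesian_general {E B : Type*} [Category E] [Category B]
    (p : E ⥤ B)
    {a b c d : E} (l : a ⟶ b) (r : c ⟶ d)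
    (hl : IsIso (p.map l)) (hr : StronglyCartesian p r)
    (u : a ⟶ c) (v : b ⟶ d) (hsq : u ≫ r = l ≫ v) :
    ∃! w : b ⟶ c, l ≫ w = u ∧ w ≫ r = v := by
  have hv : p.map v = (inv (p.map l) ≫ p.map u) ≫ p.map r := by
    rw [Category.assoc, ← p.map_comp, hsq, p.map_comp, IsIso.inv_hom_id_assoc]
  obtain ⟨w, ⟨hw, hwr⟩, hw_unique⟩ := hr v _ hv
  have hlw : l ≫ w = u :=
    hr.hom_ext (by rw [p.map_comp, hw, IsIso.hom_inv_id_assoc]) (by rw [Category.assoc, hwr, hsq])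
  refine ⟨w, ⟨hlw, hwr⟩, fun w' ⟨hlw', hw'r⟩ => hw_unique w' ⟨?_, hw'r⟩⟩
  rw [IsIso.eq_inv_comp, ← p.map_comp, hlw']

/-- For a Grothendieck fibration `p`, every morphism inverted by `p` is left orthogonal
to every `p`-cartesian morphism. -/
theorem inverted_left_orthogonal_cartesian {E B : Type*} [Category E] [Category B]
    (p : E ⥤ B) (hp : GrothFibration p)
    {a b c d : E} (l : a ⟶ b) (r : c ⟶ d)
    (hl : IsIso (p.map l)) (hr : StronglyCartesian p r)
    (u : a ⟶ c) (v : b ⟶ d) (hsq : u ≫ r = l ≫ v) :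
    ∃! w : b ⟶ c, l ≫ w = u ∧ w ≫ r = v :=
  inverted_left_orthogonal_cartesian_general p l r hl hr u v hsq
end

section
/- Let p : E ⥤ B be a Grothendieck fibration between categories. Then for every object x in E, the pair (L_x, R_x) where L_x consists of morphisms of the slice E/x whose underlying morphism in E is inverted by p, and R_x consists of morphisms whose underlying morphism is p-cartesian, forms an orthogonal factorization system on the slice category E/x. -/
open CategoryTheory CategoryTheory.Limits

/-- A class of morphisms is closed under retracts (in the arrow category). -/
def RetractClosed {C : Type*} [Category C] (P : MorphismProperty C) : Prop :=
  ∀ {a b a' b' : C} (f : a ⟶ b) (g : a' ⟶ b')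
    (i : Arrow.mk f ⟶ Arrow.mk g) (r : Arrow.mk g ⟶ Arrow.mk f),
    i ≫ r = 𝟙 (Arrow.mk f) → P g → P f

/-- `l` is (uniquely) left orthogonal to `r`. -/
def LeftOrthogonal {C : Type*} [Category C] {a b c d : C} (l : a ⟶ b) (r : c ⟶ d) : Prop :=
  ∀ (u : a ⟶ c) (v : b ⟶ d), u ≫ r = l ≫ v → ∃! w : b ⟶ c, l ≫ w = u ∧ w ≫ r = v

/-- An orthogonal factorization system: both classes closed under retracts,
unique lifting, and every morphism factors. -/
def IsOFS {C : Type*} [Category C] (L R : MorphismProperty C) : Prop :=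
  RetractClosed L ∧ RetractClosed R ∧
  (∀ {a b c d : C} (l : a ⟶ b) (r : c ⟶ d), L l → R r → LeftOrthogonal l r) ∧
  (∀ {a b : C} (h : a ⟶ b), ∃ (c : C) (l : a ⟶ c) (r : c ⟶ b), L l ∧ R r ∧ l ≫ r = h)

lemma iso_retract_aux {E B : Type*} [Category E] [Category B] (p : E ⥤ B)
    {a b a' b' : E} (f : a ⟶ b) (g : a' ⟶ b')
    (il : a ⟶ a') (ir : b ⟶ b') (rl : a' ⟶ a) (rr : b' ⟶ b)
    (hic : il ≫ g = f ≫ ir) (hrc : rl ≫ f = g ≫ rr)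
    (h1 : il ≫ rl = 𝟙 a) (h2 : ir ≫ rr = 𝟙 b)
    (hg : IsIso (p.map g)) : IsIso (p.map f) := by
  refine ⟨p.map ir ≫ inv (p.map g) ≫ p.map rl, ?_, ?_⟩
  · have : p.map f ≫ p.map ir = p.map il ≫ p.map g := by
      rw [← p.map_comp, ← p.map_comp, hic]
    rw [← Category.assoc, this]
    rw [Category.assoc, IsIso.hom_inv_id_assoc, ← p.map_comp, h1, p.map_id]
  · have : p.map rl ≫ p.map f = p.map g ≫ p.map rr := by
      rw [← p.map_comp, ← p.map_comp, hrc]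
    slice_lhs 3 4 => rw [this]
    rw [IsIso.inv_hom_id_assoc, ← p.map_comp, h2, p.map_id]

lemma cart_retract_aux {E B : Type*} [Category E] [Category B] (p : E ⥤ B)
    {a b a' b' : E} (f : a ⟶ b) (g : a' ⟶ b')
    (il : a ⟶ a') (ir : b ⟶ b') (rl : a' ⟶ a) (rr : b' ⟶ b)
    (hic : il ≫ g = f ≫ ir) (hrc : rl ≫ f = g ≫ rr)
    (h1 : il ≫ rl = 𝟙 a) (h2 : ir ≫ rr = 𝟙 b)
    (hg : StronglyCartesian p g) : StronglyCartesian p f := by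
  intro z gz h hpgz
  have hg' : p.map (gz ≫ ir) = (h ≫ p.map il) ≫ p.map g := by
    rw [p.map_comp, hpgz]
    simp only [Category.assoc]
    rw [← p.map_comp, ← p.map_comp, hic]
  obtain ⟨k', ⟨hk'1, hk'2⟩, huniq⟩ := hg (gz ≫ ir) (h ≫ p.map il) hg'
  refine ⟨k' ≫ rl, ⟨?_, ?_⟩, ?_⟩
  · rw [p.map_comp, hk'1, Category.assoc, ← p.map_comp, h1, p.map_id, Category.comp_id]
  · rw [Category.assoc, hrc, ← Category.assoc, hk'2]
    simp [h2]
  · rintro k₁ ⟨hp1, hc1⟩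
    have : k₁ ≫ il = k' := by
      apply huniq
      constructor
      · rw [p.map_comp, hp1]
      · rw [Category.assoc, hic, ← Category.assoc, hc1]
    rw [← this]
    simp [h1]

/-- For a Grothendieck fibration `p` and any object `x`, the classes of morphisms of
the slice `E/x` whose underlying morphism is `p`-inverted, resp. `p`-cartesian, form an
orthogonal factorization system on `E/x`. -/
theorem slice_cartesian_OFS {E B : Type*} [Category E] [Category B]
    (p : E ⥤ B) (hp : GrothFibration p) (x : E) :
    IsOFS (C := Over x)
      (fun _ _ f => IsIso (p.map ((Over.forget x).map f)))
      (fun _ _ f => StronglyCartesian p ((Over.forget x).map f)) := by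
  refine ⟨?_, ?_, ?_, ?_⟩
  · -- L retract closed
    intro a b a' b' f g i r hir hg
    have h1 : i.left ≫ r.left = 𝟙 a := congrArg CommaMorphism.left hir
    have h2 : i.right ≫ r.right = 𝟙 b := congrArg CommaMorphism.right hir
    have hic : i.left ≫ g = f ≫ i.right := i.w
    have hrc : r.left ≫ f = g ≫ r.right := r.w
    exact iso_retract_aux p f.left g.left i.left.left i.right.left r.left.left r.right.left
      (congrArg CommaMorphism.left hic) (congrArg CommaMorphism.left hrc)
      (congrArg CommaMorphism.left h1) (congrArg CommaMorphism.left h2) hg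
  · -- R retract closed
    intro a b a' b' f g i r hir hg
    have h1 : i.left ≫ r.left = 𝟙 a := congrArg CommaMorphism.left hir
    have h2 : i.right ≫ r.right = 𝟙 b := congrArg CommaMorphism.right hir
    have hic : i.left ≫ g = f ≫ i.right := i.w
    have hrc : r.left ≫ f = g ≫ r.right := r.w
    intro z gz hh hpgz
    exact cart_retract_aux p f.left g.left i.left.left i.right.left r.left.left r.right.left
      (congrArg CommaMorphism.left hic) (congrArg CommaMorphism.left hrc)
      (congrArg CommaMorphism.left h1) (congrArg CommaMorphism.left h2) hg gz hh hpgz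
  · -- orthogonality
    intro a b c d l r hl hr u v hsq
    change IsIso (p.map l.left) at hl
    change StronglyCartesian p r.left at hr
    have hsq' : u.left ≫ r.left = l.left ≫ v.left := congrArg CommaMorphism.left hsq
    have hv : p.map v.left = (inv (p.map l.left) ≫ p.map u.left) ≫ p.map r.left := by
      rw [Category.assoc, ← p.map_comp, hsq', p.map_comp, IsIso.inv_hom_id_assoc]
    obtain ⟨k, ⟨hk1, hk2⟩, huniq⟩ := hr v.left (inv (p.map l.left) ≫ p.map u.left) hv
    have hkc : k ≫ c.hom = b.hom := by
      rw [← Over.w r, ← Category.assoc, hk2, Over.w v]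
    refine ⟨Over.homMk k hkc, ⟨?_, ?_⟩, ?_⟩
    · -- l ≫ w = u
      ext
      have e1 : p.map (l.left ≫ k) = p.map u.left := by
        rw [p.map_comp, hk1, IsIso.hom_inv_id_assoc]
      have e2 : (l.left ≫ k) ≫ r.left = u.left ≫ r.left := by
        rw [Category.assoc, hk2, hsq']
      -- both l.left ≫ k and u.left solve the lifting problem for u.left ≫ r.left
      obtain ⟨k₀, hk₀, huniq₀⟩ := hr (u.left ≫ r.left) (p.map u.left) (by rw [p.map_comp])
      have ha : l.left ≫ k = k₀ := huniq₀ _ ⟨e1, e2⟩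
      have hb : u.left = k₀ := huniq₀ _ ⟨rfl, rfl⟩
      simpa using ha.trans hb.symm
    · ext; simpa using hk2
    · rintro w' ⟨hw1, hw2⟩
      ext
      have h1 : l.left ≫ w'.left = u.left := congrArg CommaMorphism.left hw1
      have h2 : w'.left ≫ r.left = v.left := congrArg CommaMorphism.left hw2
      have hpw : p.map w'.left = inv (p.map l.left) ≫ p.map u.left := by
        rw [← h1, p.map_comp, IsIso.inv_hom_id_assoc]
      simpa using huniq w'.left ⟨hpw, h2⟩
  · -- factorization
    intro a b h
    obtain ⟨x', f, e, hcart, hpf⟩ := hp b.left (p.map h.left)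
    have hlift : p.map h.left = eqToHom e.symm ≫ p.map f := by
      rw [hpf, eqToHom_trans_assoc, eqToHom_refl, Category.id_comp]
    obtain ⟨k, ⟨hk1, hk2⟩, _⟩ := hcart h.left (eqToHom e.symm) hlift
    refine ⟨Over.mk (f ≫ b.hom), Over.homMk k (by simp only [Over.mk_hom]; rw [← Category.assoc, hk2, Over.w]),
      Over.homMk f rfl, ?_, ?_, ?_⟩
    · show IsIso (p.map k)
      rw [hk1]
      infer_instance
    · intro z gz hh hpgz; exact hcart gz hh hpgz
    · ext; simpa using hk2
end

section
/- Let (L, R) be an orthogonal factorization system on a category E with terminal object ∗, and suppose L satisfies the two-out-of-three property. Let L : E ⥤ LE be the reflection onto the full subcategory LE of objects whose map to ∗ lies in R (left adjoint to the inclusion). Then a morphism f of E satisfies L(f) is an isomorphism if and only if f ∈ L. -/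
open CategoryTheory CategoryTheory.Limits

/-- Two-out-of-three property for a class of morphisms. -/
def TwoOutOfThree {C : Type*} [Category C] (P : MorphismProperty C) : Prop :=
  ∀ {a b c : C} (f : a ⟶ b) (g : b ⟶ c),
    (P f → P g → P (f ≫ g)) ∧ (P f → P (f ≫ g) → P g) ∧ (P g → P (f ≫ g) → P f)

/-- If `L` has the two-out-of-three property, the reflection onto the full subcategory
of objects whose map to the terminal object lies in `R` inverts exactly the morphisms
of `L`. -/
theorem reflection_inverts_iff_mem_L {E : Type*} [Category E] [HasTerminal E]
    (L R : MorphismProperty E) (h : IsOFS L R) (h3 : TwoOutOfThree L)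
    (F : E ⥤ ObjectProperty.FullSubcategory (fun x : E => R (terminal.from x)))
    (adj : F ⊣ ObjectProperty.ι (fun x : E => R (terminal.from x)))
    {x y : E} (f : x ⟶ y) :
    IsIso (F.map f) ↔ L f := by
  obtain ⟨hLr, hRr, horth, hfact⟩ := h
  set i := ObjectProperty.ι (fun x : E => R (terminal.from x)) with hi
  -- identities are in L
  have hid : ∀ a : E, L (𝟙 a) := by
    intro a
    obtain ⟨c, l, r, hl, hr, hlr⟩ := hfact (𝟙 a)
    refine hLr (𝟙 a) l (Arrow.homMk (u := 𝟙 a) (v := l) (by simp))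
      (Arrow.homMk (u := 𝟙 a) (v := r) (by simp [hlr])) ?_ hl
    ext
    · simp
    · simp [hlr]
  -- isomorphisms are in L
  have hiso : ∀ {a b : E} (e : a ⟶ b), IsIso e → L e := by
    intro a b e he
    refine hLr e (𝟙 a) (Arrow.homMk (u := 𝟙 a) (v := inv e) (by simp))
      (Arrow.homMk (u := 𝟙 a) (v := e) (by simp)) ?_ (hid a)
    ext <;> simp
  -- the unit is in L
  have hunit : ∀ z : E, L (adj.unit.app z) := by
    intro z
    obtain ⟨c, l, r, hl, hr, hlr⟩ := hfact (terminal.from z)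
    have hrc : R (terminal.from c) := by
      rw [show terminal.from c = r from Subsingleton.elim _ _]; exact hr
    set cobj : ObjectProperty.FullSubcategory (fun x : E => R (terminal.from x)) := ⟨c, hrc⟩ with hc
    set g : F.obj z ⟶ cobj := (adj.homEquiv z cobj).symm l with hg
    have hgl : adj.unit.app z ≫ g.hom = l := by
      have := (adj.homEquiv z cobj).apply_symm_apply l
      rw [Adjunction.homEquiv_unit] at this
      exact this
    obtain ⟨w, ⟨hw1, hw2⟩, -⟩ := horth l (terminal.from ((F.obj z).obj)) hl (F.obj z).property
      (adj.unit.app z) (terminal.from c) (Subsingleton.elim _ _)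
    -- w ≫ g = 𝟙 c
    have hwg : w ≫ g.hom = 𝟙 c := by
      obtain ⟨t, -, ht⟩ := horth l r hl hr l r (by simp)
      rw [ht (w ≫ g.hom) ⟨by rw [← Category.assoc, hw1, hgl], Subsingleton.elim _ _⟩,
        ht (𝟙 c) ⟨by simp, by simp⟩]
    -- g ≫ w = 𝟙
    have hgw : g ≫ (ObjectProperty.homMk w : cobj ⟶ F.obj z) = 𝟙 (F.obj z) := by
      apply (adj.homEquiv z (F.obj z)).injective
      rw [Adjunction.homEquiv_unit, Adjunction.homEquiv_unit]
      show adj.unit.app z ≫ (g.hom ≫ w) = adj.unit.app z ≫ 𝟙 _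
      rw [← Category.assoc, hgl, hw1, Category.comp_id]
    refine hLr (adj.unit.app z) l
      (Arrow.homMk (u := 𝟙 z) (v := g.hom) (by simp [hgl]))
      (Arrow.homMk (u := 𝟙 z) (v := w) (by simp [hw1])) ?_ hl
    ext
    · simp
    · exact congrArg (fun k => k.hom) hgw
  have hnat : f ≫ adj.unit.app y = adj.unit.app x ≫ (i.map (F.map f)) := by
    exact adj.unit.naturality f
  constructor
  · intro hf
    have : IsIso (i.map (F.map f)) := inferInstance
    have hLi : L (i.map (F.map f)) := hiso _ this
    have h1 : L (adj.unit.app x ≫ i.map (F.map f)) :=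
      (h3 (adj.unit.app x) (i.map (F.map f))).1 (hunit x) hLi
    rw [← hnat] at h1
    exact (h3 f (adj.unit.app y)).2.2 (hunit y) h1
  · intro hf
    have h1 : L (f ≫ adj.unit.app y) :=
      (h3 f (adj.unit.app y)).1 hf (hunit y)
    rw [hnat] at h1
    have hLi : L (i.map (F.map f)) :=
      (h3 (adj.unit.app x) (i.map (F.map f))).2.1 (hunit x) h1
    -- now show i.map (F.map f) is iso
    obtain ⟨w, ⟨hw1, hw2⟩, -⟩ := horth (i.map (F.map f)) (terminal.from ((F.obj x).obj))
      hLi (F.obj x).property (𝟙 _) (terminal.from _) (Subsingleton.elim _ _)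
    have hwf : w ≫ i.map (F.map f) = 𝟙 _ := by
      obtain ⟨t, -, ht⟩ := horth (i.map (F.map f)) (terminal.from ((F.obj y).obj))
        hLi (F.obj y).property (i.map (F.map f)) (terminal.from _) (Subsingleton.elim _ _)
      rw [ht (w ≫ i.map (F.map f)) ⟨by rw [← Category.assoc, hw1, Category.id_comp],
          Subsingleton.elim _ _⟩,
        ht (𝟙 _) ⟨by simp, Subsingleton.elim _ _⟩]
    exact ⟨⟨ObjectProperty.homMk w, by ext; exact hw1, by ext; exact hwf⟩⟩
end

section
/- Let p : E ⥤ B be an isofibration of categories. Then p is a Grothendieck fibration if and only if for every object x of E, the induced functor p_x : E/x ⥤ B/p(x) between slice categories admits a fully faithful right adjoint. -/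
/-!
A functor `L` has a fully faithful right adjoint exactly when every object `Y` is isomorphic to
some `L R` such that `L` is bijective on morphisms into `R`. For `L = Over.post p : E/x ⥤ B/p(x)`
and an object `R = (f : x' ⟶ x)` of `E/x`, that bijectivity is precisely strong cartesianness
of `f`. So the slice functors are localizations iff every `h : b ⟶ p x` has a strongly cartesian
lift up to an isomorphism `p x' ≅ b` over `p x`; the isofibration property lets one replace
`x'` by an object lying strictly over `b`, and precomposing with an isomorphism preserves
strong cartesianness.
-/

open CategoryTheory CategoryTheory.Limits

/-- `p` is an isofibration: every isomorphism `b ≅ p x` lifts to an isomorphism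
with codomain `x`. -/
def Isofibration {E B : Type*} [Category E] [Category B] (p : E ⥤ B) : Prop :=
  ∀ (x : E) {b : B} (e : b ≅ p.obj x), ∃ (y : E) (i : y ≅ x) (h : p.obj y = b),
    p.map i.hom = eqToHom h ≫ e.hom

namespace CategoryTheory.Functor

variable {C D : Type*} [Category C] [Category D] (L : C ⥤ D)

theorem exists_fullyFaithful_rightAdjoint_iff :
    (∃ q : D ⥤ C, q.Full ∧ q.Faithful ∧ Nonempty (L ⊣ q)) ↔
      ∀ Y : D, ∃ R : C, Nonempty (L.obj R ≅ Y) ∧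
        ∀ X : C, Function.Bijective (L.map : (X ⟶ R) → (L.obj X ⟶ L.obj R)) := by
  constructor
  · rintro ⟨q, _, _, ⟨adj⟩⟩ Y
    refine ⟨q.obj Y, ⟨asIso (adj.counit.app Y)⟩, fun X => ?_⟩
    have hmap : (L.map : (X ⟶ q.obj Y) → _) =
        ((Iso.refl _).homCongr (asIso (adj.counit.app Y))).symm ∘ (adj.homEquiv X Y).symm := by
      funext m
      simp [Adjunction.homEquiv_counit]
    rw [hmap]
    exact (Equiv.bijective _).comp (Equiv.bijective _)
  · intro h
    choose R ε hR using h
    let e : ∀ X Y, (L.obj X ⟶ Y) ≃ (X ⟶ R Y) := fun X Y =>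
      ((Iso.refl _).homCongr (ε Y).some).symm.trans (Equiv.ofBijective _ (hR Y X)).symm
    have he : ∀ X' X Y (m : X' ⟶ X) (u : L.obj X ⟶ Y), e X' Y (L.map m ≫ u) = m ≫ e X Y u := by
      intro X' X Y m u
      apply (hR Y X').injective
      simp [e, Equiv.ofBijective_apply_symm_apply]
    let adj := Adjunction.adjunctionOfEquivRight e he
    have hcounit : ∀ Y, adj.counit.app Y = (ε Y).some.hom := fun Y => by
      simp [adj, Adjunction.adjunctionOfEquivRight, Adjunction.mkOfHomEquiv, e]
    have : ∀ Y, IsIso (adj.counit.app Y) := fun Y => by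
      rw [hcounit]
      infer_instance
    have : IsIso adj.counit := NatIso.isIso_of_isIso_app _
    exact ⟨_, adj.fullyFaithfulROfIsIsoCounit.full, adj.fullyFaithfulROfIsIsoCounit.faithful, ⟨adj⟩⟩

end CategoryTheory.Functor

section Fibration

variable {E B : Type*} [Category E] [Category B] {p : E ⥤ B}

theorem stronglyCartesian_iff_bijective_map_over {x : E} (R : Over x) :
    StronglyCartesian p R.hom ↔ ∀ Z : Over x, Function.Bijective
      ((Over.post p).map : (Z ⟶ R) → ((Over.post p).obj Z ⟶ (Over.post p).obj R)) := by
  simp only [Function.bijective_iff_existsUnique]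
  constructor
  · intro hR Z w
    obtain ⟨k, ⟨hk, hkw⟩, hk_unique⟩ := hR Z.hom w.left (Over.w w).symm
    refine ⟨Over.homMk k hkw, by ext; exact hk, fun k' hk' => ?_⟩
    ext
    exact hk_unique k'.left ⟨congrArg CommaMorphism.left hk', Over.w k'⟩
  · intro hR z g h hgh
    obtain ⟨k, hk, hk_unique⟩ := hR (Over.mk g) (Over.homMk h hgh.symm)
    refine ⟨k.left, ⟨congrArg CommaMorphism.left hk, Over.w k⟩, fun k' ⟨hk'h, hk'g⟩ => ?_⟩
    exact congrArg CommaMorphism.left (hk_unique (Over.homMk k' hk'g) (by ext; exact hk'h))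

theorem StronglyCartesian.iso_comp {y x' x : E} {f : x' ⟶ x} (hf : StronglyCartesian p f)
    (i : y ≅ x') : StronglyCartesian p (i.hom ≫ f) := by
  intro z g h hgh
  obtain ⟨k, ⟨hkh, hkg⟩, hk_unique⟩ := hf g (h ≫ p.map i.hom) (by simpa using hgh)
  refine ⟨k ≫ i.inv, ⟨?_, by simpa using hkg⟩, fun k' ⟨hk'h, hk'g⟩ => ?_⟩
  · rw [p.map_comp, hkh, Category.assoc, ← p.map_comp, i.hom_inv_id, p.map_id, Category.comp_id]
  · rw [← hk_unique (k' ≫ i.hom) ⟨by simp [hk'h], by simpa using hk'g⟩]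
    simp

theorem grothFibration_iff_exists_stronglyCartesian_over_iso (hiso : Isofibration p) :
    GrothFibration p ↔ ∀ (x : E) (Y : Over (p.obj x)),
      ∃ R : Over x, Nonempty ((Over.post p).obj R ≅ Y) ∧ StronglyCartesian p R.hom := by
  constructor
  · intro hp x Y
    obtain ⟨x', f, e, hf, hpf⟩ := hp x Y.hom
    exact ⟨Over.mk f, ⟨Over.isoMk (eqToIso e) hpf.symm⟩, hf⟩
  · intro hp x b h
    obtain ⟨R, ⟨ε⟩, hR⟩ := hp x (Over.mk h)
    obtain ⟨y, i, hy, hpi⟩ := hiso R.left ((Over.forget _).mapIso ε).symm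
    refine ⟨y, i.hom ≫ R.hom, hy, hR.iso_comp i, ?_⟩
    rw [p.map_comp, hpi, Category.assoc]
    exact congrArg _ (Over.w ε.inv)

end Fibration

/-- An isofibration is a Grothendieck fibration iff each induced functor on slices
`E/x ⥤ B/p(x)` admits a fully faithful right adjoint (i.e. is a localization). -/
theorem fibration_iff_slices_are_localizations {E B : Type*} [Category E] [Category B]
    (p : E ⥤ B) (hiso : Isofibration p) :
    GrothFibration p ↔
      ∀ x : E, ∃ q : Over (p.obj x) ⥤ Over x,
        q.Full ∧ q.Faithful ∧ Nonempty (Over.post p ⊣ q) := by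
  simp only [grothFibration_iff_exists_stronglyCartesian_over_iso hiso,
    Functor.exists_fullyFaithful_rightAdjoint_iff, stronglyCartesian_iff_bijective_map_over]
end

section
/- Let p : E ⥤ B be a Grothendieck fibration between categories, each with a terminal object, such that p preserves the terminal object. Then p admits a fully faithful right adjoint (i.e. p is a reflective localization functor). -/
/-!
Lift the unique map `b ⟶ p 1` to a strongly cartesian arrow `x_b ⟶ 1`. Since every map into
the terminal object is the same, the cartesian property says exactly that `p` induces bijections
`(z ⟶ x_b) ≃ (p z ⟶ b)`. Thus `b ↦ x_b` is right adjoint to `p`, and its counit `p x_b ⟶ b` is an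
isomorphism, so it is fully faithful.
-/

open CategoryTheory CategoryTheory.Limits

section

variable {E B : Type*} [Category E] [Category B]

theorem StronglyCartesian.map_bijective_of_isTerminal {p : E ⥤ B} {x' x : E} {f : x' ⟶ x}
    (hf : StronglyCartesian p f) (hx : IsTerminal x) (hpx : IsTerminal (p.obj x)) (z : E) :
    Function.Bijective (p.map : (z ⟶ x') → (p.obj z ⟶ p.obj x')) := by
  refine (Function.bijective_iff_existsUnique _).mpr fun h => ?_
  obtain ⟨k, ⟨hk, -⟩, hk_unique⟩ := hf (hx.from z) h (hpx.hom_ext _ _)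
  exact ⟨k, hk, fun k' hk' => hk_unique k' ⟨hk', hx.hom_ext _ _⟩⟩

theorem GrothFibration.exists_map_bijective_of_isTerminal {p : E ⥤ B} (hp : GrothFibration p)
    {t : E} (ht : IsTerminal t) (hpt : IsTerminal (p.obj t)) (b : B) :
    ∃ (x : E) (_ : p.obj x ≅ b), ∀ z, Function.Bijective (p.map : (z ⟶ x) → _) := by
  obtain ⟨x, f, rfl, hf, -⟩ := hp t (hpt.from b)
  exact ⟨x, Iso.refl _, hf.map_bijective_of_isTerminal ht hpt⟩

theorem CategoryTheory.Functor.exists_fullyFaithful_rightAdjoint_of_map_bijective (p : E ⥤ B)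
    (h : ∀ b : B, ∃ (x : E) (_ : p.obj x ≅ b), ∀ z, Function.Bijective (p.map : (z ⟶ x) → _)) :
    ∃ i : B ⥤ E, i.Full ∧ i.Faithful ∧ Nonempty (p ⊣ i) := by
  choose x φ hbij using h
  let homEquiv (z : E) (b : B) : (p.obj z ⟶ b) ≃ (z ⟶ x b) :=
    ((Iso.refl _).homCongr (φ b).symm).trans (Equiv.ofBijective _ (hbij b z)).symm
  have homEquiv_naturality (z' z : E) (b : B) (w : z' ⟶ z) (g : p.obj z ⟶ b) :
      homEquiv z' b (p.map w ≫ g) = w ≫ homEquiv z b g := by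
    apply (hbij b z').injective
    simp [homEquiv, Equiv.ofBijective_apply_symm_apply]
  let adj := Adjunction.adjunctionOfEquivRight homEquiv homEquiv_naturality
  have : IsIso adj.counit := by
    rw [NatTrans.isIso_iff_isIso_app]
    intro b
    have counit_app : adj.counit.app b = (φ b).hom := by
      simp [adj, homEquiv, Adjunction.adjunctionOfEquivRight]
    rw [counit_app]
    infer_instance
  have hR := adj.fullyFaithfulROfIsIsoCounit
  exact ⟨_, hR.full, hR.faithful, ⟨adj⟩⟩

end

theorem pointed_fibration_is_localization_general {E B : Type*} [Category E] [Category B]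
    [HasTerminal E]
    (p : E ⥤ B) (hp : GrothFibration p) (ht : IsTerminal (p.obj (⊤_ E))) :
    ∃ i : B ⥤ E, i.Full ∧ i.Faithful ∧ Nonempty (p ⊣ i) :=
  p.exists_fullyFaithful_rightAdjoint_of_map_bijective
    (hp.exists_map_bijective_of_isTerminal terminalIsTerminal ht)

/-- A Grothendieck fibration between categories with terminal objects which preserves
the terminal object admits a fully faithful right adjoint (it is a reflective
localization). -/
theorem pointed_fibration_is_localization {E B : Type*} [Category E] [Category B]
    [HasTerminal E] [HasTerminal B]
    (p : E ⥤ B) (hp : GrothFibration p) (ht : IsTerminal (p.obj (⊤_ E))) :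
    ∃ i : B ⥤ E, i.Full ∧ i.Faithful ∧ Nonempty (p ⊣ i) :=
  pointed_fibration_is_localization_general p hp ht
end

section
/- Let p : E ⥤ B be a Grothendieck fibration between categories with terminal objects, preserving the terminal object, and let q : F ⥤ C be any functor. If a functor f : E ⥤ F sends every morphism inverted by p to a morphism inverted by q, then there exists a functor g : B ⥤ C, unique up to natural isomorphism, with a natural isomorphism q ∘ f ≅ g ∘ p. -/
/-!
Let `t` be terminal in `E` with `p t` terminal in `B`. For `b : B`, the strongly cartesian lift
`s b ⟶ t` of `b ⟶ p t` has the property that a map `z ⟶ s b` is determined by its image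
`p z ⟶ b`, since the other half of the data, a map `z ⟶ t`, is unique. Hence `s` is a right
adjoint of `p` with invertible counit, so `p` is the localization at the morphisms it inverts,
and the universal property of localizations gives the factorization and its uniqueness.
-/

open CategoryTheory CategoryTheory.Limits

section

variable {E B : Type*} [Category E] [Category B] {p : E ⥤ B}

lemma StronglyCartesian.map_bijective_of_isTerminal_s12 {x t : E} {π : x ⟶ t}
    (hπ : StronglyCartesian p π) (ht : IsTerminal t) (hpt : IsTerminal (p.obj t)) (z : E) :
    Function.Bijective (fun k : z ⟶ x => p.map k) := by
  refine ⟨fun k₁ k₂ h => ?_, fun h => ?_⟩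
  · obtain ⟨k, -, hk⟩ := hπ (k₁ ≫ π) (p.map k₁) (p.map_comp _ _)
    exact (hk k₁ ⟨rfl, rfl⟩).trans (hk k₂ ⟨h.symm, ht.hom_ext _ _⟩).symm
  · obtain ⟨k, ⟨hk, -⟩, -⟩ := hπ (ht.from z) h (hpt.hom_ext _ _)
    exact ⟨k, hk⟩

namespace GrothFibration

lemma exists_stronglyCartesian_to_terminal (hp : GrothFibration p) {t : E}
    (hpt : IsTerminal (p.obj t)) (b : B) :
    ∃ x : E, p.obj x = b ∧ ∃ π : x ⟶ t, StronglyCartesian p π := by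
  obtain ⟨x, π, hx, hπ, -⟩ := hp t (hpt.from b)
  exact ⟨x, hx, π, hπ⟩

variable (hp : GrothFibration p) {t : E} (hpt : IsTerminal (p.obj t))

noncomputable def terminalLift (b : B) : E :=
  (hp.exists_stronglyCartesian_to_terminal hpt b).choose

lemma obj_terminalLift (b : B) : p.obj (hp.terminalLift hpt b) = b :=
  (hp.exists_stronglyCartesian_to_terminal hpt b).choose_spec.1

lemma map_bijective_terminalLift (ht : IsTerminal t) (z : E) (b : B) :
    Function.Bijective (fun k : z ⟶ hp.terminalLift hpt b => p.map k) :=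
  StronglyCartesian.map_bijective_of_isTerminal_s12
    (hp.exists_stronglyCartesian_to_terminal hpt b).choose_spec.2.choose_spec ht hpt z

noncomputable def terminalLiftHomEquiv (ht : IsTerminal t) (z : E) (b : B) :
    (p.obj z ⟶ b) ≃ (z ⟶ hp.terminalLift hpt b) :=
  ((Iso.refl _).homCongr (eqToIso (hp.obj_terminalLift hpt b).symm)).trans
    (Equiv.ofBijective _ (hp.map_bijective_terminalLift hpt ht z b)).symm

variable (ht : IsTerminal t)

lemma map_terminalLiftHomEquiv {z : E} {b : B} (h : p.obj z ⟶ b) :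
    p.map (hp.terminalLiftHomEquiv hpt ht z b h) =
      h ≫ eqToHom (hp.obj_terminalLift hpt b).symm := by
  simp only [terminalLiftHomEquiv, Equiv.trans_apply, Iso.homCongr_apply, Iso.refl_inv,
    eqToIso.hom, Category.id_comp]
  exact Equiv.ofBijective_apply_symm_apply (fun k => p.map k) _ _

lemma terminalLiftHomEquiv_naturality {z' z : E} {b : B} (f : z' ⟶ z) (h : p.obj z ⟶ b) :
    hp.terminalLiftHomEquiv hpt ht z' b (p.map f ≫ h) =
      f ≫ hp.terminalLiftHomEquiv hpt ht z b h :=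
  (hp.map_bijective_terminalLift hpt ht z' b).1 <| by
    simp [map_terminalLiftHomEquiv]

lemma terminalLiftHomEquiv_symm_apply {z : E} {b : B} (k : z ⟶ hp.terminalLift hpt b) :
    (hp.terminalLiftHomEquiv hpt ht z b).symm k = p.map k ≫ eqToHom (hp.obj_terminalLift hpt b) :=
  (Equiv.symm_apply_eq _).2 <| (hp.map_bijective_terminalLift hpt ht z b).1 <| by
    simp [map_terminalLiftHomEquiv]

noncomputable def terminalLiftFunctor : B ⥤ E :=
  Adjunction.rightAdjointOfEquiv (hp.terminalLiftHomEquiv hpt ht)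
    fun _ _ _ => hp.terminalLiftHomEquiv_naturality hpt ht

noncomputable def terminalLiftAdjunction : p ⊣ hp.terminalLiftFunctor hpt ht :=
  Adjunction.adjunctionOfEquivRight _ _

instance : IsIso (hp.terminalLiftAdjunction hpt ht).counit := by
  have (b : B) : IsIso ((hp.terminalLiftAdjunction hpt ht).counit.app b) := by
    simp only [terminalLiftAdjunction, Adjunction.adjunctionOfEquivRight_counit_app,
      terminalLiftHomEquiv_symm_apply, Functor.comp_obj, CategoryTheory.Functor.map_id,
      Category.id_comp]
    exact (eqToIso (hp.obj_terminalLift hpt b)).isIso_hom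
  exact NatIso.isIso_of_isIso_app _

end GrothFibration

lemma GrothFibration.isLocalization_of_isTerminal (hp : GrothFibration p) {t : E}
    (ht : IsTerminal t) (hpt : IsTerminal (p.obj t)) :
    p.IsLocalization ((MorphismProperty.isomorphisms B).inverseImage p) :=
  have hR := (hp.terminalLiftAdjunction hpt ht).fullyFaithfulROfIsIsoCounit
  have := hR.full
  have := hR.faithful
  (hp.terminalLiftAdjunction hpt ht).isLocalization

end

lemma CategoryTheory.Functor.IsLocalization.exists_lift_unique {C D E : Type*} [Category C]
    [Category D] [Category E] (L : C ⥤ D) (W : MorphismProperty C) [L.IsLocalization W] (F : C ⥤ E)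
    (hF : W.IsInvertedBy F) :
    ∃ G : D ⥤ E, Nonempty (F ≅ L ⋙ G) ∧
      ∀ G' : D ⥤ E, Nonempty (F ≅ L ⋙ G') → Nonempty (G ≅ G') := by
  refine ⟨Localization.lift F hF L, ⟨(Localization.fac F hF L).symm⟩, fun G' ⟨e⟩ => ?_⟩
  have : Localization.Lifting L W F G' := ⟨e.symm⟩
  exact ⟨Localization.liftNatIso L W F F _ G' (Iso.refl F)⟩

theorem pointed_fibration_universal_property_general {E B F C : Type*}
    [Category E] [Category B] [Category F] [Category C]
    [HasTerminal E]
    (p : E ⥤ B) (hp : GrothFibration p) (ht : IsTerminal (p.obj (⊤_ E)))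
    (q : F ⥤ C) (f : E ⥤ F)
    (hf : ∀ {a b : E} (h : a ⟶ b), IsIso (p.map h) → IsIso (q.map (f.map h))) :
    ∃ g : B ⥤ C, Nonempty (f ⋙ q ≅ p ⋙ g) ∧
      ∀ g' : B ⥤ C, Nonempty (f ⋙ q ≅ p ⋙ g') → Nonempty (g ≅ g') :=
  have := hp.isLocalization_of_isTerminal terminalIsTerminal ht
  Functor.IsLocalization.exists_lift_unique p ((MorphismProperty.isomorphisms B).inverseImage p)
    (f ⋙ q) fun _ _ h hh => hf h hh

/-- A terminal-object-preserving Grothendieck fibration `p` is a localization at the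
morphisms it inverts: any functor inverting those morphisms factors through `p`,
uniquely up to natural isomorphism. -/
theorem pointed_fibration_universal_property {E B F C : Type*}
    [Category E] [Category B] [Category F] [Category C]
    [HasTerminal E] [HasTerminal B]
    (p : E ⥤ B) (hp : GrothFibration p) (ht : IsTerminal (p.obj (⊤_ E)))
    (q : F ⥤ C) (f : E ⥤ F)
    (hf : ∀ {a b : E} (h : a ⟶ b), IsIso (p.map h) → IsIso (q.map (f.map h))) :
    ∃ g : B ⥤ C, Nonempty (f ⋙ q ≅ p ⋙ g) ∧
      ∀ g' : B ⥤ C, Nonempty (f ⋙ q ≅ p ⋙ g') → Nonempty (g ≅ g') :=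
  pointed_fibration_universal_property_general p hp ht q f hf
end

section
/- Let p : E ⥤ B be a Grothendieck fibration between categories with terminal objects such that p preserves the terminal object. Then for every morphism f : x ⟶ y in E, f is p-cartesian if and only if the naturality square with top f, bottom p(f), and vertical maps the unit components η_x : x ⟶ i(p(x)) and η_y : y ⟶ i(p(y)) of the adjunction p ⊣ i (where i is a fully faithful right adjoint of p), is a pullback square in E. -/
/-!
Transposing along `p ⊣ i` turns a cone `(a, b)` over the cospan `i (p f)`, `η_y` into a pair
`(h, b)` with `h ≫ p f = p b`, where `h` is the transpose of `a`, and turns the condition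
`l ≫ η_x = a` on a lift into `p l = h`. Under this dictionary the universal property of the
pullback is literally the lifting property defining a cartesian morphism.
-/

open CategoryTheory CategoryTheory.Limits

theorem CategoryTheory.IsPullback.iff_existsUnique_lift {C : Type*} [Category C]
    {P X Y Z : C} {fst : P ⟶ X} {snd : P ⟶ Y} {f : X ⟶ Z} {g : Y ⟶ Z}
    (sq : CommSq fst snd f g) :
    IsPullback fst snd f g ↔
      ∀ {W : C} (a : W ⟶ X) (b : W ⟶ Y), a ≫ f = b ≫ g →
        ∃! l : W ⟶ P, l ≫ fst = a ∧ l ≫ snd = b := by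
  refine ⟨fun hpb W a b w => ⟨hpb.lift a b w, ⟨hpb.lift_fst a b w, hpb.lift_snd a b w⟩, ?_⟩,
    fun H => ?_⟩
  · rintro l ⟨hl₁, hl₂⟩
    exact hpb.hom_ext (by rw [hl₁, hpb.lift_fst]) (by rw [hl₂, hpb.lift_snd])
  · choose lift fac uniq using fun s : PullbackCone f g => H s.fst s.snd s.condition
    exact IsPullback.of_isLimit' sq <| PullbackCone.IsLimit.mk sq.w lift
      (fun s => (fac s).1) (fun s => (fac s).2) (fun s m h₁ h₂ => uniq s m ⟨h₁, h₂⟩)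

theorem CategoryTheory.Adjunction.comp_unit_app_eq_homEquiv {C D : Type*} [Category C]
    [Category D] {L : C ⥤ D} {R : D ⥤ C} (adj : L ⊣ R) {z y : C} (g : z ⟶ y) :
    g ≫ adj.unit.app y = adj.homEquiv z (L.obj y) (L.map g) := by
  rw [Adjunction.homEquiv_unit, adj.unit_naturality]

theorem cartesian_iff_unit_square_pullback_general {E B : Type*} [Category E] [Category B]
    (p : E ⥤ B)
    (i : B ⥤ E) (adj : p ⊣ i)
    {x y : E} (f : x ⟶ y) :
    StronglyCartesian p f ↔
      IsPullback (adj.unit.app x) f (i.map (p.map f)) (adj.unit.app y) := by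
  rw [IsPullback.iff_existsUnique_lift ⟨adj.unit_naturality f⟩]
  refine forall_congr' fun z => ?_
  refine forall_comm.trans <|
    (adj.homEquiv z (p.obj x)).forall_congr fun h => forall_congr' fun g => ?_
  simp only [adj.comp_unit_app_eq_homEquiv, ← adj.homEquiv_naturality_right,
    (adj.homEquiv _ _).apply_eq_iff_eq, eq_comm (a := p.map g)]

/-- For a terminal-object-preserving Grothendieck fibration `p` with fully faithful
right adjoint `i`, a morphism `f` is `p`-cartesian iff its unit naturality square is a
pullback: the induced factorization system is simple. -/
theorem cartesian_iff_unit_square_pullback {E B : Type*} [Category E] [Category B]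
    [HasTerminal E] [HasTerminal B]
    (p : E ⥤ B) (hp : GrothFibration p) (ht : IsTerminal (p.obj (⊤_ E)))
    (i : B ⥤ E) [i.Full] [i.Faithful] (adj : p ⊣ i)
    {x y : E} (f : x ⟶ y) :
    StronglyCartesian p f ↔
      IsPullback (adj.unit.app x) f (i.map (p.map f)) (adj.unit.app y) :=
  cartesian_iff_unit_square_pullback_general p i adj f
end
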